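/- Let $X$ be a compact topological space, $U$ a set, $K \subseteq X$ compact with nonempty interior, and for each $u \in U$ let $f_u : X \to X$ be continuous. Suppose $K$ is weakly controlled invariant: there exists $t \in \mathbb{N}$ such that for every $x \in X$ there exist inputs $H_0(x), \dots, H_{t-1}(x) \in U$ with $f_{H_{t-1}(x)} \circ \cdots \circ f_{H_0(x)}(x) \in \mathrm{int}\,K$. Then there exist $\tau \in \mathbb{N}$, a finite open cover $\alpha$ of $X$, and maps $G_0, \dots, G_{\tau-1} : \alpha \to U$ such that for every $A \in \alpha$, $f_{G_{\tau-1}(A)} \circ \cdots \circ f_{G_0(A)}(A) \subseteq \mathrm{int}\,K$. -/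

import Mathlib

/-- `seqComp f u x` applies the inputs `u 0, u 1, …` in order to the state `x`
via the continuous maps `f u`. -/
def seqComp {X U : Type*} (f : U → X → X) {n : ℕ} (u : Fin n → U) (x : X) : X :=
  (List.ofFn u).foldl (fun y a => f a y) x

/-!
Continuity of the maps `f u` makes the set of states that a fixed input sequence steers into
the open set `int K` open, so the input sequence chosen at a state `x` serves a whole open
neighbourhood of `x`. Compactness of `X` extracts a finite subcover, and each cover element
inherits the input sequence of a state it came from.
-/

open Set Filter Topology

theorem continuous_list_foldl {X U : Type*} [TopologicalSpace X] {f : U → X → X}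
    (hf : ∀ u, Continuous (f u)) (l : List U) :
    Continuous fun x => l.foldl (fun y a => f a y) x := by
  induction l with
  | nil => exact continuous_id
  | cons a l ih => exact ih.comp (hf a)

theorem continuous_seqComp {X U : Type*} [TopologicalSpace X] {f : U → X → X}
    (hf : ∀ u, Continuous (f u)) {n : ℕ} (u : Fin n → U) :
    Continuous (seqComp f u) :=
  continuous_list_foldl hf (List.ofFn u)

theorem exists_finset_isOpen_cover_forall_mem {X β : Type*} [TopologicalSpace X]
    [CompactSpace X] [Nonempty β] {P : β → X → Prop} (h : ∀ x, ∃ b, ∀ᶠ y in 𝓝 x, P b y) :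
    ∃ α : Finset (Set X), (∀ A ∈ α, IsOpen A) ∧ univ ⊆ ⋃₀ (α : Set (Set X)) ∧
      ∃ G : Set X → β, ∀ A ∈ α, ∀ y ∈ A, P (G A) y := by
  classical
  set W : β → Set X := fun b => interior {y | P b y}
  have hcover : univ ⊆ ⋃ b, W b := fun x _ =>
    let ⟨b, hb⟩ := h x
    mem_iUnion.2 ⟨b, mem_interior_iff_mem_nhds.2 hb⟩
  obtain ⟨s, hs⟩ := isCompact_univ.elim_finite_subcover W (fun _ => isOpen_interior) hcover
  refine ⟨s.image W, ?_, by simpa [sUnion_image] using hs, Function.invFun W, ?_⟩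
  · simp only [Finset.mem_image]
    rintro _ ⟨b, -, rfl⟩
    exact isOpen_interior
  · simp only [Finset.mem_image]
    rintro _ ⟨b, -, rfl⟩ y hy
    rw [← Function.invFun_eq (f := W) ⟨b, rfl⟩] at hy
    exact interior_subset hy

theorem c_feasible_fully_observed_general {X U : Type*} [TopologicalSpace X] [CompactSpace X]
    (K : Set X) (hKint : (interior K).Nonempty)
    (f : U → X → X) (hf : ∀ u, Continuous (f u))
    (hWCI : ∃ t : ℕ, 0 < t ∧ ∀ x : X, ∃ H : Fin t → U, seqComp f H x ∈ interior K) :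
    ∃ τ : ℕ, 0 < τ ∧ ∃ α : Finset (Set X), (∀ A ∈ α, IsOpen A) ∧
      Set.univ ⊆ ⋃₀ (α : Set (Set X)) ∧
      ∃ G : Set X → Fin τ → U, ∀ A ∈ α, ∀ x ∈ A, seqComp f (G A) x ∈ interior K := by
  obtain ⟨t, ht, hH⟩ := hWCI
  have : Nonempty (Fin t → U) := ⟨(hH hKint.some).choose⟩
  refine ⟨t, ht, exists_finset_isOpen_cover_forall_mem
    (P := fun H x => seqComp f H x ∈ interior K) fun x => ?_⟩
  obtain ⟨H, hx⟩ := hH x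
  exact ⟨H, (continuous_seqComp hf H).continuousAt (isOpen_interior.mem_nhds hx)⟩

/-- Feasibility of constraint (C) in the fully observed case: if `K` is weakly controlled
invariant (each state can be steered into `int K` in `t` steps) and each `f_u` is
continuous, then there exist `τ`, a finite open cover `α` of `X` and maps `G_k : α → U`
steering every cover element entirely into `int K`. -/
theorem c_feasible_fully_observed {X U : Type*} [TopologicalSpace X] [CompactSpace X]
    (K : Set X) (hK : IsCompact K) (hKint : (interior K).Nonempty)
    (f : U → X → X) (hf : ∀ u, Continuous (f u))
    (hWCI : ∃ t : ℕ, 0 < t ∧ ∀ x : X, ∃ H : Fin t → U, seqComp f H x ∈ interior K) :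
    ∃ τ : ℕ, 0 < τ ∧ ∃ α : Finset (Set X), (∀ A ∈ α, IsOpen A) ∧
      Set.univ ⊆ ⋃₀ (α : Set (Set X)) ∧
      ∃ G : Set X → Fin τ → U, ∀ A ∈ α, ∀ x ∈ A, seqComp f (G A) x ∈ interior K :=
  c_feasible_fully_observed_general K hKint f hf hWCI
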